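/- arXiv:1710.02269 — 6 statements merged into one kernel-verified Lean document; each statement's English description precedes it below -/
import Mathlib

section
/- Let m ≥ 1 be an integer and define the kernel R(t,s) = ∫₀^{min(s,t)} ((s−u)^{m−1}(t−u)^{m−1}/((m−1)!)²) du for t,s ∈ [0,1]. Then for every integrable f : [0,1] → ℝ and every t ∈ [0,1], the composition satisfies T₀ᵐ(T₁ᵐf)(t) = ∫₀¹ R(t,s) f(s) ds; that is, R is the integral kernel of the operator T₀ᵐT₁ᵐ. -/
open MeasureTheory intervalIntegral

/-- The operator `T₀ f (t) = ∫₀ᵗ f(s) ds`. -/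
noncomputable def T0 (f : ℝ → ℝ) : ℝ → ℝ := fun t => ∫ s in (0:ℝ)..t, f s

/-- The operator `T₁ f (t) = ∫ₜ¹ f(s) ds`. -/
noncomputable def T1 (f : ℝ → ℝ) : ℝ → ℝ := fun t => ∫ s in t..(1:ℝ), f s

/-- The kernel `R(t,s) = ∫₀^{min(s,t)} ((s−u)^{m−1}(t−u)^{m−1}/((m−1)!)²) du`. -/
noncomputable def Rker (m : ℕ) (t s : ℝ) : ℝ :=
  ∫ u in (0:ℝ)..(min s t),
    ((s - u) ^ (m - 1) * (t - u) ^ (m - 1)) / ((Nat.factorial (m - 1) : ℝ))^2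

/-!
Cauchy's formula for repeated integration writes `T₀ⁿ⁺¹ g (t) = ∫₀ᵗ (t-u)ⁿ/n! g(u) du` and
`T₁ⁿ⁺¹ f (u) = ∫ᵤ¹ (s-u)ⁿ/n! f(s) ds`; each induction step is Fubini on a triangle. Composing
the two and applying Fubini once more, now on the trapezoid `0 ≤ u ≤ t, u ≤ s ≤ 1`, collects the
`u`-integral into the kernel `R(t,s)`.
-/

open Set Nat

theorem integral_integral_swap_trapezoid {a b c : ℝ} {F : ℝ → ℝ → ℝ} (hac : a ≤ c) (hcb : c ≤ b)
    (hF : IntegrableOn (Function.uncurry F) (Icc a c ×ˢ Icc a b)) :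
    ∫ u in a..c, ∫ s in u..b, F u s = ∫ s in a..b, ∫ u in a..min s c, F u s := by
  set G := {p : ℝ × ℝ | p.1 ≤ p.2}.indicator (Function.uncurry F)
  have hG : Integrable G ((volume.restrict (Ioc a c)).prod (volume.restrict (Ioc a b))) := by
    rw [Measure.prod_restrict, ← Measure.volume_eq_prod]
    exact (hF.mono_set (prod_mono Ioc_subset_Icc_self Ioc_subset_Icc_self)).indicator
      (measurableSet_le measurable_fst measurable_snd)
  have inner_s : ∀ u ∈ Ioc a c, ∫ s in u..b, F u s = ∫ s in Ioc a b, G (u, s) := by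
    intro u hu
    have hslice : Ioc a b ∩ Ici u = Icc u b := by
      ext s; simp only [mem_inter_iff, mem_Ioc, mem_Ici, mem_Icc]
      constructor
      · rintro ⟨⟨_, hsb⟩, hus⟩; exact ⟨hus, hsb⟩
      · rintro ⟨hus, hsb⟩; exact ⟨⟨hu.1.trans_le hus, hsb⟩, hus⟩
    have hG_slice : (fun s => G (u, s)) = (Ici u).indicator (F u) := by
      ext s; simp [G, indicator_apply]
    rw [hG_slice, setIntegral_indicator measurableSet_Ici, hslice, integral_Icc_eq_integral_Ioc,
      integral_of_le (hu.2.trans hcb)]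
  have inner_u : ∀ s ∈ Ioc a b, ∫ u in a..min s c, F u s = ∫ u in Ioc a c, G (u, s) := by
    intro s hs
    have hG_slice : (fun u => G (u, s)) = (Iic s).indicator (fun u => F u s) := by
      ext u; simp [G, indicator_apply]
    rw [hG_slice, setIntegral_indicator measurableSet_Iic, Ioc_inter_Iic, min_comm,
      integral_of_le (le_min hac hs.1.le)]
  rw [integral_of_le hac, integral_of_le (hac.trans hcb),
    setIntegral_congr_fun measurableSet_Ioc inner_s,
    setIntegral_congr_fun measurableSet_Ioc inner_u]
  exact integral_integral_swap hG

theorem integral_integral_swap_triangle {a b : ℝ} {F : ℝ → ℝ → ℝ} (hab : a ≤ b)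
    (hF : IntegrableOn (Function.uncurry F) (Icc a b ×ˢ Icc a b)) :
    ∫ u in a..b, ∫ s in u..b, F u s = ∫ s in a..b, ∫ u in a..s, F u s := by
  rw [integral_integral_swap_trapezoid hab le_rfl hF]
  refine integral_congr fun s hs => ?_
  rw [uIcc_of_le hab] at hs
  simp only [min_eq_left hs.2]

theorem MeasureTheory.IntegrableOn.continuousOn_mul_comp_snd {K : ℝ × ℝ → ℝ} {f : ℝ → ℝ}
    {a b c d : ℝ} (hK : ContinuousOn K (Icc a b ×ˢ Icc c d)) (hf : IntegrableOn f (Icc c d)) :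
    IntegrableOn (fun p => K p * f p.2) (Icc a b ×ˢ Icc c d) := by
  refine IntegrableOn.continuousOn_mul hK ?_ (isCompact_Icc.prod isCompact_Icc)
  rw [IntegrableOn, Measure.volume_eq_prod, ← Measure.prod_restrict]
  exact hf.comp_snd _

theorem MeasureTheory.IntegrableOn.continuousOn_mul_comp_fst {K : ℝ × ℝ → ℝ} {f : ℝ → ℝ}
    {a b c d : ℝ} (hK : ContinuousOn K (Icc a b ×ˢ Icc c d)) (hf : IntegrableOn f (Icc a b)) :
    IntegrableOn (fun p => K p * f p.1) (Icc a b ×ˢ Icc c d) := by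
  refine IntegrableOn.continuousOn_mul hK ?_ (isCompact_Icc.prod isCompact_Icc)
  rw [IntegrableOn, Measure.volume_eq_prod, ← Measure.prod_restrict]
  exact hf.comp_fst _

theorem integral_pow_div_factorial (n : ℕ) (d : ℝ) :
    ∫ x in (0:ℝ)..d, x ^ n / n ! = d ^ (n + 1) / (n + 1)! := by
  rw [intervalIntegral.integral_div, integral_pow, Nat.factorial_succ]
  push_cast
  field_simp
  ring

theorem integral_sub_pow_div_factorial_left (n : ℕ) (a b : ℝ) :
    ∫ u in a..b, (b - u) ^ n / n ! = (b - a) ^ (n + 1) / (n + 1)! := by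
  rw [integral_comp_sub_left (fun x => x ^ n / n !), sub_self, integral_pow_div_factorial]

theorem integral_sub_pow_div_factorial_right (n : ℕ) (a b : ℝ) :
    ∫ x in a..b, (x - a) ^ n / n ! = (b - a) ^ (n + 1) / (n + 1)! := by
  rw [integral_comp_sub_right (fun x => x ^ n / n !), sub_self, integral_pow_div_factorial]

theorem integrableOn_T1 {f : ℝ → ℝ} {a : ℝ} (hf : IntegrableOn f (Icc a 1)) :
    IntegrableOn (T1 f) (Icc a 1) := by
  rcases le_or_gt a 1 with ha | ha
  · rw [← uIcc_of_le ha] at hf ⊢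
    exact (continuousOn_primitive_interval_left hf).integrableOn_compact isCompact_uIcc
  · simp [Icc_eq_empty_of_lt ha]

theorem integrableOn_T1_iterate {f : ℝ → ℝ} {a : ℝ} (hf : IntegrableOn f (Icc a 1)) (k : ℕ) :
    IntegrableOn (T1^[k] f) (Icc a 1) := by
  induction k with
  | zero => exact hf
  | succ k ih => rw [Function.iterate_succ_apply']; exact integrableOn_T1 ih

theorem T1_iterate_succ_eq (n : ℕ) {f : ℝ → ℝ} {t : ℝ} (ht : t ≤ 1)
    (hf : IntegrableOn f (Icc t 1)) :
    T1^[n + 1] f t = ∫ s in t..1, (s - t) ^ n / n ! * f s := by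
  induction n generalizing t with
  | zero => simp [T1]
  | succ n ih =>
    have hK : ContinuousOn (fun p : ℝ × ℝ => (p.2 - p.1) ^ n / n !) (Icc t 1 ×ˢ Icc t 1) :=
      by fun_prop
    calc T1^[n + 1 + 1] f t = ∫ x in t..1, T1^[n + 1] f x := by
          rw [Function.iterate_succ_apply']; rfl
      _ = ∫ x in t..1, ∫ s in x..1, (s - x) ^ n / n ! * f s := by
          refine integral_congr fun x hx => ?_
          rw [uIcc_of_le ht] at hx
          exact ih hx.2 (hf.mono_set (Icc_subset_Icc_left hx.1))
      _ = ∫ s in t..1, ∫ x in t..s, (s - x) ^ n / n ! * f s :=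
          integral_integral_swap_triangle ht (hf.continuousOn_mul_comp_snd hK)
      _ = ∫ s in t..1, (s - t) ^ (n + 1) / (n + 1)! * f s := by
          simp only [intervalIntegral.integral_mul_const, integral_sub_pow_div_factorial_left]

theorem T0_iterate_succ_eq (n : ℕ) {g : ℝ → ℝ} {t : ℝ} (ht : 0 ≤ t)
    (hg : IntegrableOn g (Icc 0 t)) :
    T0^[n + 1] g t = ∫ u in 0..t, (t - u) ^ n / n ! * g u := by
  induction n generalizing t with
  | zero => simp [T0]
  | succ n ih =>
    have hK : ContinuousOn (fun p : ℝ × ℝ => (p.2 - p.1) ^ n / n !) (Icc 0 t ×ˢ Icc 0 t) :=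
      by fun_prop
    calc T0^[n + 1 + 1] g t = ∫ x in 0..t, T0^[n + 1] g x := by
          rw [Function.iterate_succ_apply']; rfl
      _ = ∫ x in 0..t, ∫ u in 0..x, (x - u) ^ n / n ! * g u := by
          refine integral_congr fun x hx => ?_
          rw [uIcc_of_le ht] at hx
          exact ih hx.1 (hg.mono_set (Icc_subset_Icc_right hx.2))
      _ = ∫ u in 0..t, ∫ x in u..t, (x - u) ^ n / n ! * g u :=
          (integral_integral_swap_triangle (F := fun u x => (x - u) ^ n / n ! * g u) ht
            (hg.continuousOn_mul_comp_fst hK)).symm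
      _ = ∫ u in 0..t, (t - u) ^ (n + 1) / (n + 1)! * g u := by
          simp only [intervalIntegral.integral_mul_const, integral_sub_pow_div_factorial_right]

/-- For `m ≥ 1` and integrable `f : [0,1] → ℝ`, the composition `T₀ᵐ T₁ᵐ` has integral
kernel `R`: for every `t ∈ [0,1]`, `T₀ᵐ (T₁ᵐ f) (t) = ∫₀¹ R(t,s) f(s) ds`. -/
theorem T0m_T1m_integral_kernel (m : ℕ) (hm : 1 ≤ m) (f : ℝ → ℝ)
    (hf : IntegrableOn f (Set.Icc (0:ℝ) 1)) :
    ∀ t ∈ Set.Icc (0:ℝ) 1,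
      T0^[m] (T1^[m] f) t = ∫ s in (0:ℝ)..1, Rker m t s * f s := by
  obtain ⟨n, rfl⟩ := Nat.exists_eq_add_of_le' hm
  rintro t ⟨ht0, ht1⟩
  have hK : ContinuousOn (fun p : ℝ × ℝ => (t - p.1) ^ n / n ! * ((p.2 - p.1) ^ n / n !))
      (Icc 0 t ×ˢ Icc 0 1) := by fun_prop
  have hT1f : IntegrableOn (T1^[n + 1] f) (Icc 0 t) :=
    (integrableOn_T1_iterate hf (n + 1)).mono_set (Icc_subset_Icc_right ht1)
  rw [T0_iterate_succ_eq n ht0 hT1f]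
  calc ∫ u in 0..t, (t - u) ^ n / n ! * T1^[n + 1] f u
      = ∫ u in 0..t, ∫ s in u..1, (t - u) ^ n / n ! * ((s - u) ^ n / n !) * f s := by
        refine integral_congr fun u hu => ?_
        rw [uIcc_of_le ht0] at hu
        rw [T1_iterate_succ_eq n (hu.2.trans ht1) (hf.mono_set (Icc_subset_Icc_left hu.1)),
          ← intervalIntegral.integral_const_mul]
        simp only [mul_assoc]
    _ = ∫ s in 0..1, ∫ u in 0..min s t, (t - u) ^ n / n ! * ((s - u) ^ n / n !) * f s :=
        integral_integral_swap_trapezoid ht0 ht1 (hf.continuousOn_mul_comp_snd hK)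
    _ = ∫ s in 0..1, Rker (n + 1) t s * f s := by
        refine integral_congr fun s _ => ?_
        simp only [Rker, Nat.add_sub_cancel, ← intervalIntegral.integral_mul_const]
        refine integral_congr fun u _ => ?_
        ring
end

section
/- Let r > 1/2 and let (s_k)_{k≥1} be a sequence of positive reals with c₁ k^{−2r} ≤ s_k ≤ c₂ k^{−2r} for all k ≥ 1, for some constants 0 < c₁ ≤ c₂. Then there exist constants 0 < C₁ ≤ C₂ < ∞ such that for all λ ∈ (0,1], C₁ λ^{−1/(2r)} ≤ Σ_{k=1}^∞ s_k/(λ + s_k) ≤ C₂ λ^{−1/(2r)}. -/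
/-!
Write `λ = A ^ (-2r)` with `A ≥ 1` and let `N = ⌊A⌋₊`, so that `N ≤ A ≤ 2N`. For `k < N` we have
`s_k ≥ c₁ λ`, so each of the first `N` terms `s_k / (λ + s_k)` is at least `c₁ / (1 + c₁)`; this
gives the lower bound. For the upper bound the first `N` terms are at most `1`, and the tail is at
most `λ⁻¹ Σ_{k ≥ N} s_k ≤ c₂ λ⁻¹ N ^ (1 - 2r) / (2r - 1)` by the integral test, which is `O(A)`.
-/

open Real Set Finset

theorem tsum_natCast_add_one_rpow_neg_tail_le {p : ℝ} (hp : 1 < p) {N : ℕ} (hN : 0 < N) :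
    ∑' n : ℕ, (((n + N : ℕ) : ℝ) + 1) ^ (-p) ≤ (N : ℝ) ^ (1 - p) / (p - 1) := by
  have hN' : (0 : ℝ) < N := by exact_mod_cast hN
  calc ∑' n : ℕ, (((n + N : ℕ) : ℝ) + 1) ^ (-p)
      = ∑' n : ℕ, ((n + N + 1 : ℕ) : ℝ) ^ (-p) := by push_cast; rfl
    _ ≤ ∫ x in Ioi (N : ℝ), x ^ (-p) :=
        ((antitoneOn_rpow_Ioi_of_exponent_nonpos (by linarith)).mono
            fun x hx => hN'.trans_le hx).tsum_comp_add_le_integral N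
          (integrableOn_Ioi_rpow_of_lt (by linarith) hN') fun x hx => by
            have : 0 < x := hN'.trans hx
            positivity
    _ = (N : ℝ) ^ (1 - p) / (p - 1) := by
        rw [integral_Ioi_rpow_of_lt (by linarith) hN', neg_div, ← div_neg]
        ring_nf

theorem le_two_mul_natFloor {A : ℝ} (hA : 1 ≤ A) : A ≤ 2 * ⌊A⌋₊ := by
  have h1 : (1 : ℝ) ≤ ⌊A⌋₊ := by exact_mod_cast Nat.one_le_floor_iff A |>.2 hA
  linarith [Nat.lt_floor_add_one A]

theorem summable_natCast_add_one_rpow_neg {p : ℝ} (hp : 1 < p) :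
    Summable fun k : ℕ => ((k : ℝ) + 1) ^ (-p) := by
  have := (summable_nat_add_iff 1).2 (Real.summable_nat_rpow.2 (neg_lt_neg hp))
  exact_mod_cast this

section

variable {s : ℕ → ℝ} {c l p : ℝ}

theorem div_add_le_div_add {a b l : ℝ} (hl : 0 < l) (ha : 0 ≤ a) (hab : a ≤ b) :
    a / (l + a) ≤ b / (l + b) := by
  rw [div_le_div_iff₀ (by linarith) (by linarith)]
  nlinarith

theorem summable_div_add (hp : 1 < p) (hl : 0 < l) (hs0 : ∀ k, 0 ≤ s k)
    (hs : ∀ k : ℕ, s k ≤ c * ((k : ℝ) + 1) ^ (-p)) : Summable fun k => s k / (l + s k) := by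
  refine .of_nonneg_of_le (fun k => by have := hs0 k; positivity) (fun k => ?_)
    ((summable_natCast_add_one_rpow_neg hp).mul_left (c / l))
  calc s k / (l + s k) ≤ s k / l := div_le_div_of_nonneg_left (hs0 k) hl (by linarith [hs0 k])
    _ ≤ c * ((k : ℝ) + 1) ^ (-p) / l := by gcongr; exact hs k
    _ = c / l * ((k : ℝ) + 1) ^ (-p) := by ring

theorem natCast_mul_le_tsum_div_add {N : ℕ} (hl : 0 < l) (hc : 0 ≤ c)
    (hsum : Summable fun k => s k / (l + s k)) (hs0 : ∀ k, 0 ≤ s k)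
    (hs : ∀ k < N, c * l ≤ s k) : N * (c / (1 + c)) ≤ ∑' k, s k / (l + s k) := by
  have hterm : c / (1 + c) = c * l / (l + c * l) := by field_simp
  calc N * (c / (1 + c)) = ∑ _k ∈ range N, c * l / (l + c * l) := by simp [hterm]
    _ ≤ ∑ k ∈ range N, s k / (l + s k) :=
        sum_le_sum fun k hk => div_add_le_div_add hl (by positivity) (hs k (mem_range.1 hk))
    _ ≤ ∑' k, s k / (l + s k) :=
        hsum.sum_le_tsum _ fun k _ => by have := hs0 k; positivity

theorem tsum_div_add_le (hp : 1 < p) (hl : 0 < l) (hs0 : ∀ k, 0 ≤ s k)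
    (hs : ∀ k : ℕ, s k ≤ c * ((k : ℝ) + 1) ^ (-p)) {N : ℕ} (hN : 0 < N) :
    ∑' k, s k / (l + s k) ≤ N + c / l * ((N : ℝ) ^ (1 - p) / (p - 1)) := by
  have hc : 0 ≤ c := by simpa using (hs0 0).trans (hs 0)
  have hsum := summable_div_add hp hl hs0 hs
  have head : ∑ k ∈ range N, s k / (l + s k) ≤ N := by
    simpa using sum_le_sum fun k (_ : k ∈ range N) =>
      (div_le_one (by linarith [hs0 k])).2 (by linarith : s k ≤ l + s k)
  have tail : ∑' i, s (i + N) / (l + s (i + N)) ≤ c / l * ((N : ℝ) ^ (1 - p) / (p - 1)) := by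
    have hshift := (summable_nat_add_iff N).2 (summable_natCast_add_one_rpow_neg hp)
    calc ∑' i, s (i + N) / (l + s (i + N))
        ≤ ∑' i, c / l * (((i + N : ℕ) : ℝ) + 1) ^ (-p) := by
          refine (summable_nat_add_iff N).2 hsum |>.tsum_le_tsum (fun i => ?_)
            (hshift.mul_left _)
          calc s (i + N) / (l + s (i + N)) ≤ s (i + N) / l :=
                div_le_div_of_nonneg_left (hs0 _) hl (by linarith [hs0 (i + N)])
            _ ≤ c * (((i + N : ℕ) : ℝ) + 1) ^ (-p) / l := by gcongr; exact hs _
            _ = _ := by ring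
      _ ≤ c / l * ((N : ℝ) ^ (1 - p) / (p - 1)) := by
          rw [tsum_mul_left]
          gcongr
          exact tsum_natCast_add_one_rpow_neg_tail_le hp hN
  rw [← hsum.sum_add_tsum_nat_add N]
  linarith

variable {A : ℝ}

theorem mul_le_tsum_div_add_rpow_neg (hc : 0 ≤ c) (hp : 0 ≤ p) (hA : 1 ≤ A)
    (hsum : Summable fun k => s k / (A ^ (-p) + s k))
    (hs : ∀ k : ℕ, c * ((k : ℝ) + 1) ^ (-p) ≤ s k) :
    c / (2 * (1 + c)) * A ≤ ∑' k, s k / (A ^ (-p) + s k) := by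
  have hs0 : ∀ k, 0 ≤ s k := fun k => (mul_nonneg hc (by positivity)).trans (hs k)
  have hN : ∀ k < ⌊A⌋₊, c * A ^ (-p) ≤ s k := fun k hk => by
    have hkN : ((k + 1 : ℕ) : ℝ) ≤ ⌊A⌋₊ := by exact_mod_cast hk
    have hkA : (k : ℝ) + 1 ≤ A := by
      push_cast at hkN; linarith [Nat.floor_le (by linarith : 0 ≤ A)]
    calc c * A ^ (-p) ≤ c * ((k : ℝ) + 1) ^ (-p) := mul_le_mul_of_nonneg_left
          (rpow_le_rpow_of_nonpos (by positivity) hkA (neg_nonpos.2 hp)) hc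
      _ ≤ s k := hs k
  calc c / (2 * (1 + c)) * A ≤ c / (2 * (1 + c)) * (2 * ⌊A⌋₊) := by
        gcongr; exact le_two_mul_natFloor hA
    _ = ⌊A⌋₊ * (c / (1 + c)) := by field_simp
    _ ≤ ∑' k, s k / (A ^ (-p) + s k) :=
        natCast_mul_le_tsum_div_add (by positivity) hc hsum hs0 hN

theorem tsum_div_add_rpow_neg_le (hp : 1 < p) (hA : 1 ≤ A) (hs0 : ∀ k, 0 ≤ s k)
    (hs : ∀ k : ℕ, s k ≤ c * ((k : ℝ) + 1) ^ (-p)) :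
    ∑' k, s k / (A ^ (-p) + s k) ≤ (1 + c * 2 ^ (p - 1) / (p - 1)) * A := by
  have hc : 0 ≤ c := by simpa using (hs0 0).trans (hs 0)
  have hA0 : 0 < A := by linarith
  have hN : 0 < ⌊A⌋₊ := Nat.floor_pos.2 hA
  have hNA : (⌊A⌋₊ : ℝ) ≤ A := Nat.floor_le hA0.le
  have hfloor : (⌊A⌋₊ : ℝ) ^ (1 - p) ≤ 2 ^ (p - 1) * A ^ (1 - p) := calc
    (⌊A⌋₊ : ℝ) ^ (1 - p) ≤ (A / 2) ^ (1 - p) :=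
        rpow_le_rpow_of_nonpos (by positivity) (by linarith [le_two_mul_natFloor hA])
          (by linarith)
    _ = 2 ^ (p - 1) * A ^ (1 - p) := by
        rw [div_rpow hA0.le zero_le_two, div_eq_mul_inv, ← rpow_neg zero_le_two, neg_sub,
          mul_comm]
  have hApow : A ^ (1 - p) / A ^ (-p) = A := by
    rw [← rpow_sub hA0]; simp
  calc ∑' k, s k / (A ^ (-p) + s k)
      ≤ ⌊A⌋₊ + c / A ^ (-p) * ((⌊A⌋₊ : ℝ) ^ (1 - p) / (p - 1)) :=
        tsum_div_add_le hp (by positivity) hs0 hs hN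
    _ ≤ A + c / A ^ (-p) * (2 ^ (p - 1) * A ^ (1 - p) / (p - 1)) := by
        gcongr
    _ = A + c * 2 ^ (p - 1) / (p - 1) * (A ^ (1 - p) / A ^ (-p)) := by ring
    _ = (1 + c * 2 ^ (p - 1) / (p - 1)) * A := by rw [hApow]; ring

theorem exists_one_le_rpow_neg_eq {l p : ℝ} (hl0 : 0 < l) (hl1 : l ≤ 1) (hp : 0 < p) :
    ∃ A, 1 ≤ A ∧ l ^ (-(1 / p)) = A ∧ l = A ^ (-p) := by
  refine ⟨_, one_le_rpow_of_pos_of_le_one_of_nonpos hl0 hl1 (by simp [hp.le]), rfl, ?_⟩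
  rw [← rpow_mul hl0.le, neg_mul_neg, one_div_mul_cancel hp.ne', rpow_one]

end

/-- If `s_k ≍ k^{−2r}` with `r > 1/2` (here `s k` stands for `s_{k+1}`), then the trace
quantity `Σ_k s_k/(λ + s_k)` is of exact order `λ^{−1/(2r)}` for `λ ∈ (0,1]`. -/
theorem trace_order_polynomial_decay (r : ℝ) (hr : 1 / 2 < r) (s : ℕ → ℝ)
    (c₁ c₂ : ℝ) (hc₁ : 0 < c₁) (hc : c₁ ≤ c₂)
    (hs : ∀ k : ℕ, c₁ * ((k : ℝ) + 1) ^ (-(2 * r)) ≤ s k ∧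
                   s k ≤ c₂ * ((k : ℝ) + 1) ^ (-(2 * r))) :
    ∃ C₁ C₂ : ℝ, 0 < C₁ ∧ C₁ ≤ C₂ ∧
      ∀ l : ℝ, 0 < l → l ≤ 1 →
        C₁ * l ^ (-(1 / (2 * r))) ≤ (∑' k, s k / (l + s k)) ∧
        (∑' k, s k / (l + s k)) ≤ C₂ * l ^ (-(1 / (2 * r))) := by
  have hp : 1 < 2 * r := by linarith
  have hs0 : ∀ k, 0 ≤ s k := fun k => (mul_nonneg hc₁.le (by positivity)).trans (hs k).1
  refine ⟨c₁ / (2 * (1 + c₁)), 1 + c₂ * 2 ^ (2 * r - 1) / (2 * r - 1), by positivity, ?_,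
    fun l hl0 hl1 => ?_⟩
  · have hC₁ : c₁ / (2 * (1 + c₁)) ≤ 1 := by rw [div_le_one (by positivity)]; linarith
    have hc₂ : 0 ≤ c₂ := hc₁.le.trans hc
    have hq : 0 < 2 * r - 1 := sub_pos.2 hp
    have hC₂ : 0 ≤ c₂ * 2 ^ (2 * r - 1) / (2 * r - 1) := by positivity
    linarith
  obtain ⟨A, hA, hlA, rfl⟩ := exists_one_le_rpow_neg_eq hl0 hl1 (by linarith : 0 < 2 * r)
  rw [hlA]
  exact ⟨mul_le_tsum_div_add_rpow_neg hc₁.le (by linarith) hA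
      (summable_div_add hp hl0 hs0 fun k => (hs k).2) fun k => (hs k).1,
    tsum_div_add_rpow_neg_le hp hA hs0 fun k => (hs k).2⟩
end

section
/- Let r > 0 and let (s_k)_{k≥1} be a sequence of positive reals with c₁ e^{−2rk} ≤ s_k ≤ c₂ e^{−2rk} for all k ≥ 1, for some constants 0 < c₁ ≤ c₂. Then there exist constants 0 < C₁ ≤ C₂ < ∞ and λ₀ ∈ (0,1) such that for all λ ∈ (0, λ₀], C₁ log(1/λ) ≤ Σ_{k=1}^∞ s_k/(λ + s_k) ≤ C₂ log(1/λ). -/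
set_option maxHeartbeats 1600000 in
/-- If `s_k ≍ e^{−2rk}` with `r > 0` (here `s k` stands for `s_{k+1}`), then the trace
quantity `Σ_k s_k/(λ + s_k)` is of exact order `log(1/λ)` for small `λ`. -/
theorem trace_order_exponential_decay (r : ℝ) (hr : 0 < r) (s : ℕ → ℝ)
    (c₁ c₂ : ℝ) (hc₁ : 0 < c₁) (hc : c₁ ≤ c₂)
    (hs : ∀ k : ℕ, c₁ * Real.exp (-(2 * r * ((k : ℝ) + 1))) ≤ s k ∧
                   s k ≤ c₂ * Real.exp (-(2 * r * ((k : ℝ) + 1)))) :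
    ∃ C₁ C₂ l₀ : ℝ, 0 < C₁ ∧ C₁ ≤ C₂ ∧ 0 < l₀ ∧ l₀ < 1 ∧
      ∀ l : ℝ, 0 < l → l ≤ l₀ →
        C₁ * Real.log (1 / l) ≤ (∑' k, s k / (l + s k)) ∧
        (∑' k, s k / (l + s k)) ≤ C₂ * Real.log (1 / l) := by
  have hc₂ : 0 < c₂ := lt_of_lt_of_le hc₁ hc
  set a : ℝ := Real.exp (-(2*r)) with ha_def
  have ha0 : 0 < a := Real.exp_pos _
  have ha1 : a < 1 := by
    rw [ha_def, Real.exp_lt_one_iff]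
    nlinarith
  have h1a : 0 < 1 - a := by linarith
  have hexp : ∀ k : ℕ, Real.exp (-(2 * r * ((k : ℝ) + 1))) = a ^ (k+1) := by
    intro k
    rw [ha_def, ← Real.exp_nat_mul]
    congr 1
    push_cast
    ring
  clear_value a
  have hspos : ∀ k, 0 < s k := fun k =>
    lt_of_lt_of_le (by positivity) (hs k).1
  have hden : ∀ l : ℝ, 0 < l → ∀ k, 0 < l + s k := fun l hl k => by
    have := hspos k; linarith
  have hterm_nonneg : ∀ l : ℝ, 0 < l → ∀ k, 0 ≤ s k / (l + s k) := fun l hl k =>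
    div_nonneg (hspos k).le (hden l hl k).le
  have hterm_le_one : ∀ l : ℝ, 0 < l → ∀ k, s k / (l + s k) ≤ 1 := fun l hl k => by
    rw [div_le_one (hden l hl k)]; linarith [hspos k]
  have hgeo : Summable (fun k : ℕ => a ^ k) := summable_geometric_of_lt_one ha0.le ha1
  have hterm_le : ∀ l : ℝ, 0 < l → ∀ k, s k / (l + s k) ≤ (c₂ * a / l) * a ^ k := by
    intro l hl k
    have h1 : s k / (l + s k) ≤ s k / l :=
      div_le_div_of_nonneg_left (hspos k).le hl (by linarith [hspos k])
    have h2 : s k ≤ c₂ * a ^ (k+1) := by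
      have := (hs k).2; rwa [hexp k] at this
    calc s k / (l + s k) ≤ s k / l := h1
      _ ≤ (c₂ * a ^ (k+1)) / l := by gcongr
      _ = (c₂ * a / l) * a ^ k := by ring
  have hsum : ∀ l : ℝ, 0 < l → Summable (fun k => s k / (l + s k)) := by
    intro l hl
    exact Summable.of_nonneg_of_le (hterm_nonneg l hl) (hterm_le l hl)
      (hgeo.mul_left (c₂ * a / l))
  set B : ℝ := max 0 (Real.log c₂) with hB_def
  clear_value B
  have hB0 : 0 ≤ B := by rw [hB_def]; exact le_max_left _ _
  have hA0 : 0 ≤ B/(2*r) + 1 + a/(1-a) := by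
    have : 0 ≤ B/(2*r) := by positivity
    have : 0 ≤ a/(1-a) := by positivity
    linarith [div_nonneg hB0 (by linarith : (0:ℝ) ≤ 2*r)]
  refine ⟨1/(16*r), 1/(2*r) + (B/(2*r) + 1 + a/(1-a)),
    min (c₁^2) (Real.exp (-(8*r+1))), by positivity, ?_, by positivity, ?_, ?_⟩
  · have : 1/(16*r) ≤ 1/(2*r) := by
      apply one_div_le_one_div_of_le (by linarith) (by linarith)
    linarith
  · calc min (c₁^2) (Real.exp (-(8*r+1))) ≤ Real.exp (-(8*r+1)) := min_le_right _ _
      _ < 1 := by rw [Real.exp_lt_one_iff]; nlinarith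
  intro l hl hl0
  set L : ℝ := Real.log (1 / l) with hL_def
  clear_value L
  have hLlog : L = -Real.log l := by rw [hL_def, one_div, Real.log_inv]
  have hlexp : l ≤ Real.exp (-(8*r+1)) := le_trans hl0 (min_le_right _ _)
  have hlc : l ≤ c₁^2 := le_trans hl0 (min_le_left _ _)
  have hL8 : 8*r + 1 ≤ L := by
    have := Real.log_le_log hl hlexp
    rw [Real.log_exp] at this
    rw [hLlog]; linarith
  have hL1 : 1 ≤ L := by linarith
  have hLpos : 0 < L := by linarith
  have hexpL : Real.exp (-L) = l := by
    rw [hLlog, neg_neg, Real.exp_log hl]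
  constructor
  · -- lower bound
    set N : ℕ := ⌊L/(4*r)⌋₊ with hN_def
    clear_value N
    have hkey : ∀ k, k < N → l ≤ s k := by
      intro k hk
      have hk1 : (k:ℝ) + 1 ≤ N := by exact_mod_cast Nat.succ_le_of_lt hk
      have hNle : (N:ℝ) ≤ L/(4*r) := hN_def ▸ Nat.floor_le (by positivity)
      have h1 : Real.exp (-(L/2)) ≤ Real.exp (-(2*r*((k:ℝ)+1))) := by
        apply Real.exp_le_exp.mpr
        have : 2*r*((k:ℝ)+1) ≤ 2*r*N := by nlinarith
        have h2 : 2*r*(N:ℝ) ≤ L/2 := by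
          have := mul_le_mul_of_nonneg_left hNle (by linarith : (0:ℝ) ≤ 2*r)
          calc 2*r*(N:ℝ) ≤ 2*r*(L/(4*r)) := this
            _ = L/2 := by field_simp; ring
        linarith
      have h3 : Real.exp (-(L/2)) ≤ c₁ := by
        rw [hLlog]
        have hlog : Real.log l ≤ 2 * Real.log c₁ := by
          have := Real.log_le_log hl hlc
          rwa [show c₁^2 = c₁*c₁ by ring, Real.log_mul hc₁.ne' hc₁.ne',
            ← two_mul] at this
        calc Real.exp (-(-Real.log l/2)) = Real.exp (Real.log l / 2) := by ring_nf
          _ ≤ Real.exp (Real.log c₁) := Real.exp_le_exp.mpr (by linarith)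
          _ = c₁ := Real.exp_log hc₁
      have h4 : l = Real.exp (-(L/2)) * Real.exp (-(L/2)) := by
        rw [← Real.exp_add, ← hexpL]; ring_nf
      calc l = Real.exp (-(L/2)) * Real.exp (-(L/2)) := h4
        _ ≤ c₁ * Real.exp (-(L/2)) := by
            apply mul_le_mul_of_nonneg_right h3 (Real.exp_pos _).le
        _ = c₁ * Real.exp (-(2*r*((k:ℝ)+1))) * (Real.exp (-(L/2)) / Real.exp (-(2*r*((k:ℝ)+1)))) := by
            field_simp
        _ ≤ c₁ * Real.exp (-(2*r*((k:ℝ)+1))) * 1 := by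
            apply mul_le_mul_of_nonneg_left _ (by positivity)
            rw [div_le_one (Real.exp_pos _)]
            exact h1
        _ = c₁ * Real.exp (-(2*r*((k:ℝ)+1))) := by ring
        _ ≤ s k := (hs k).1
    have hhalf : ∀ k ∈ Finset.range N, (1:ℝ)/2 ≤ s k / (l + s k) := by
      intro k hk
      rw [Finset.mem_range] at hk
      have := hkey k hk
      rw [le_div_iff₀ (hden l hl k)]
      linarith [hspos k]
    have hsum_lb : (N:ℝ) * (1/2) ≤ ∑ k ∈ Finset.range N, s k / (l + s k) := by
      calc (N:ℝ) * (1/2) = ∑ _k ∈ Finset.range N, (1:ℝ)/2 := by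
            rw [Finset.sum_const, Finset.card_range]; ring
        _ ≤ _ := Finset.sum_le_sum hhalf
    have htsum_lb : ∑ k ∈ Finset.range N, s k / (l + s k) ≤ ∑' k, s k / (l + s k) :=
      Summable.sum_le_tsum _ (fun k _ => hterm_nonneg l hl k) (hsum l hl)
    have hNge : L/(4*r) - 1 < (N:ℝ) := hN_def ▸ Nat.sub_one_lt_floor _
    have hfinal : 1/(16*r) * L ≤ (N:ℝ) * (1/2) := by
      rw [div_mul_eq_mul_div, one_mul, div_le_iff₀ (by linarith : (0:ℝ) < 16*r)]
      have h8 : 8*r ≤ L := by linarith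
      have h1 : L - 4*r < 4*r*N := by
        have := mul_lt_mul_of_pos_right hNge (by linarith : (0:ℝ) < 4*r)
        have heq : (L/(4*r) - 1) * (4*r) = L - 4*r := by field_simp
        nlinarith
      nlinarith
    linarith
  · -- upper bound
    set M : ℕ := ⌈(L + B)/(2*r)⌉₊ with hM_def
    clear_value M
    have hMge : (L + B)/(2*r) ≤ (M:ℝ) := hM_def ▸ Nat.le_ceil _
    have hMle : (M:ℝ) < (L + B)/(2*r) + 1 :=
      hM_def ▸ Nat.ceil_lt_add_one (by positivity)
    have hsplit : (∑ k ∈ Finset.range M, s k / (l + s k)) +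
        (∑' k, s (k + M) / (l + s (k + M))) = ∑' k, s k / (l + s k) :=
      Summable.sum_add_tsum_nat_add M (hsum l hl)
    have hhead : ∑ k ∈ Finset.range M, s k / (l + s k) ≤ (M:ℝ) := by
      calc ∑ k ∈ Finset.range M, s k / (l + s k) ≤ ∑ _k ∈ Finset.range M, (1:ℝ) :=
            Finset.sum_le_sum (fun k _ => hterm_le_one l hl k)
        _ = M := by rw [Finset.sum_const, Finset.card_range]; simp
    -- key: c₂ * a ^ M ≤ l
    have hkey : c₂ * a ^ M ≤ l := by
      have haM : a ^ M = Real.exp ((M:ℝ) * (-(2*r))) := by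
        rw [ha_def, ← Real.exp_nat_mul]
      have h2rM : L + Real.log c₂ ≤ 2*r*(M:ℝ) := by
        have h := mul_le_mul_of_nonneg_left hMge (by linarith : (0:ℝ) ≤ 2*r)
        have heq : 2*r*((L + B)/(2*r)) = L + B := by field_simp
        rw [heq] at h
        have hBc : Real.log c₂ ≤ B := by rw [hB_def]; exact le_max_right _ _
        linarith
      have : a ^ M ≤ Real.exp (-L - Real.log c₂) := by
        rw [haM]
        apply Real.exp_le_exp.mpr
        linarith
      calc c₂ * a ^ M ≤ c₂ * Real.exp (-L - Real.log c₂) := by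
            apply mul_le_mul_of_nonneg_left this hc₂.le
        _ = c₂ * (Real.exp (-L) * Real.exp (-Real.log c₂)) := by
            rw [← Real.exp_add]; ring_nf
        _ = c₂ * (l * c₂⁻¹) := by
            rw [hexpL, Real.exp_neg, Real.exp_log hc₂]
        _ = l := by field_simp
    have htail : (∑' k, s (k + M) / (l + s (k + M))) ≤ a/(1-a) := by
      have hb : ∀ k : ℕ, s (k + M) / (l + s (k + M)) ≤ (c₂ * a ^ (M+1) / l) * a ^ k := by
        intro k
        calc s (k + M) / (l + s (k + M)) ≤ (c₂ * a / l) * a ^ (k + M) := hterm_le l hl (k + M)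
          _ = (c₂ * a ^ (M+1) / l) * a ^ k := by rw [pow_add]; ring
      calc (∑' k, s (k + M) / (l + s (k + M))) ≤ ∑' k : ℕ, (c₂ * a ^ (M+1) / l) * a ^ k := by
            apply Summable.tsum_le_tsum hb ((summable_nat_add_iff M).mpr (hsum l hl))
              (hgeo.mul_left _)
        _ = (c₂ * a ^ (M+1) / l) * (1-a)⁻¹ := by
            rw [tsum_mul_left, tsum_geometric_of_lt_one ha0.le ha1]
        _ ≤ (a : ℝ)/(1-a) := by
            have h1 : c₂ * a ^ (M+1) ≤ l * a := by
              have he : c₂ * a ^ (M+1) = (c₂ * a ^ M) * a := by ring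
              rw [he]
              exact mul_le_mul_of_nonneg_right hkey ha0.le
            have h2 : c₂ * a ^ (M+1) / l ≤ a := by
              rw [div_le_iff₀ hl]
              linarith [mul_comm a l]
            rw [div_eq_mul_inv a]
            exact mul_le_mul_of_nonneg_right h2 (by positivity)
      
    have htot : (∑' k, s k / (l + s k)) ≤ (M:ℝ) + a/(1-a) := by
      rw [← hsplit]; linarith
    have hMbound : (M:ℝ) ≤ L/(2*r) + B/(2*r) + 1 := by
      have : (L + B)/(2*r) = L/(2*r) + B/(2*r) := by ring
      linarith
    have hAL : B/(2*r) + 1 + a/(1-a) ≤ (B/(2*r) + 1 + a/(1-a)) * L := by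
      nlinarith
    calc (∑' k, s k / (l + s k)) ≤ (M:ℝ) + a/(1-a) := htot
      _ ≤ L/(2*r) + (B/(2*r) + 1 + a/(1-a)) := by linarith
      _ ≤ L/(2*r) + (B/(2*r) + 1 + a/(1-a)) * L := by linarith
      _ = (1/(2*r) + (B/(2*r) + 1 + a/(1-a))) * L := by ring
end

section
/- Let n, M ≥ 1 be integers, σ > 0, u ∈ ℝ, and let x₁, …, x_M ∈ ℝⁿ satisfy ⟨x_k, x_j⟩ = n if k = j and 0 if k ≠ j (Euclidean inner product). Let P be the law on ℝⁿ of a vector Y with independent N(0, σ²) coordinates, and define ℓ(y) = exp(−nMu²/(2σ²)) · 2^{−M} Σ_{ξ ∈ {−1,1}^M} exp((u/σ²) Σ_{k=1}^M ξ_k ⟨x_k, y⟩). Then ∫ ℓ dP = 1 and ∫ ℓ² dP = (cosh(n u²/σ²))^M. -/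
/-!
Writing `ℓ` as an average of exponential tilts `exp ⟨a_ξ, y⟩` with `a_ξ = (u/σ²) ∑ₖ ξₖ xₖ`,
both moments reduce to the Gaussian moment generating function
`∫ exp ⟨a, y⟩ dP = exp (σ² ‖a‖² / 2)`, which factors over the independent coordinates.
Orthogonality of the `xₖ` gives `‖a_ξ‖² = n u² M / σ⁴` and
`‖a_ξ + a_ξ'‖² = (n u² / σ⁴) (2M + 2 ∑ₖ ξₖ ξ'ₖ)`, and the remaining sum over `ξ'` factors
over the coordinates `k` into `(2 cosh (n u² / σ²))^M` up to the normalising exponential.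
-/

open MeasureTheory ProbabilityTheory
open Real Finset
open scoped NNReal

lemma integral_exp_mul_gaussianReal (μ : ℝ) (v : ℝ≥0) (t : ℝ) :
    ∫ y, exp (t * y) ∂gaussianReal μ v = exp (μ * t + v * t ^ 2 / 2) := by
  simpa [mgf] using congrFun (mgf_fun_id_gaussianReal (μ := μ) (v := v)) t

section GaussianProduct

variable {ι : Type*} [Fintype ι]

lemma integrable_exp_sum_mul_gaussianPi (v : ℝ≥0) (a : ι → ℝ) :
    Integrable (fun y : ι → ℝ => exp (∑ i, a i * y i))
      (Measure.pi fun _ => gaussianReal 0 v) := by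
  simp_rw [exp_sum]
  exact Integrable.fintype_prod fun i => integrable_exp_mul_gaussianReal (a i)

lemma integral_exp_sum_mul_gaussianPi (v : ℝ≥0) (a : ι → ℝ) :
    ∫ y : ι → ℝ, exp (∑ i, a i * y i) ∂(Measure.pi fun _ => gaussianReal 0 v)
      = exp (v / 2 * ∑ i, a i ^ 2) := by
  simp_rw [exp_sum]
  rw [integral_fintype_prod_eq_prod (fun i y => exp (a i * y))]
  simp_rw [integral_exp_mul_gaussianReal, zero_mul, zero_add, ← exp_sum, mul_sum]
  exact congrArg exp (sum_congr rfl fun i _ => by ring)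

variable {κ : Type*} [Fintype κ] (x : κ → ι → ℝ)

lemma mul_sum_mul_sum_mul_comm (t : ℝ) (b : κ → ℝ) (y : ι → ℝ) :
    t * ∑ k, b k * ∑ i, x k i * y i = ∑ i, (t * ∑ k, b k * x k i) * y i := by
  simp_rw [mul_sum, sum_mul]
  exact sum_comm.trans (sum_congr rfl fun i _ => sum_congr rfl fun k _ => by ring)

lemma integrable_exp_mul_sum_gaussianPi (v : ℝ≥0) (t : ℝ) (b : κ → ℝ) :
    Integrable (fun y : ι → ℝ => exp (t * ∑ k, b k * ∑ i, x k i * y i))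
      (Measure.pi fun _ => gaussianReal 0 v) := by
  simp_rw [mul_sum_mul_sum_mul_comm]
  exact integrable_exp_sum_mul_gaussianPi v _

variable [DecidableEq κ] {x}

lemma sum_sq_sum_mul_of_orthogonal {c : ℝ}
    (hx : ∀ k j, ∑ i, x k i * x j i = if k = j then c else 0) (b : κ → ℝ) :
    ∑ i, (∑ k, b k * x k i) ^ 2 = c * ∑ k, b k ^ 2 := by
  calc ∑ i, (∑ k, b k * x k i) ^ 2 = ∑ k, ∑ j, b k * b j * ∑ i, x k i * x j i := by
        simp_rw [sq, sum_mul_sum, mul_sum]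
        rw [sum_comm]
        refine sum_congr rfl fun k _ => ?_
        exact sum_comm.trans (sum_congr rfl fun j _ => sum_congr rfl fun i _ => by ring)
    _ = c * ∑ k, b k ^ 2 := by simp [hx, mul_sum, sq, mul_comm]

lemma integral_exp_mul_sum_gaussianPi_of_orthogonal (v : ℝ≥0) {c : ℝ}
    (hx : ∀ k j, ∑ i, x k i * x j i = if k = j then c else 0) (t : ℝ) (b : κ → ℝ) :
    ∫ y : ι → ℝ, exp (t * ∑ k, b k * ∑ i, x k i * y i) ∂(Measure.pi fun _ => gaussianReal 0 v)
      = exp (v * c * t ^ 2 / 2 * ∑ k, b k ^ 2) := by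
  simp_rw [mul_sum_mul_sum_mul_comm, integral_exp_sum_mul_gaussianPi, mul_pow, ← mul_sum,
    sum_sq_sum_mul_of_orthogonal hx]
  ring_nf

end GaussianProduct

lemma sq_sum_exp_mul_sum {α κ : Type*} [Fintype α] [Fintype κ] (t : ℝ) (b : α → κ → ℝ)
    (z : κ → ℝ) :
    (∑ a, exp (t * ∑ k, b a k * z k)) ^ 2
      = ∑ a, ∑ a', exp (t * ∑ k, (b a k + b a' k) * z k) := by
  simp_rw [sq, sum_mul_sum, ← exp_add, ← mul_add, ← sum_add_distrib, add_mul]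

section Signs

variable {κ : Type*} [Fintype κ]

lemma sum_sign_sq (ξ : κ → Bool) : ∑ k, (if ξ k then (1 : ℝ) else -1) ^ 2 = Fintype.card κ := by
  simp [apply_ite (· ^ 2)]

lemma sum_exp_sum_sign_add_sq [DecidableEq κ] (T : ℝ) (ξ : κ → Bool) :
    ∑ ξ' : κ → Bool,
        exp (T / 2 * ∑ k, ((if ξ k then (1 : ℝ) else -1) + if ξ' k then 1 else -1) ^ 2)
      = (2 * exp T * cosh T) ^ Fintype.card κ := by
  simp_rw [mul_sum, exp_sum]
  rw [← Fintype.prod_sum (fun k (b : Bool) =>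
    exp (T / 2 * ((if ξ k then (1 : ℝ) else -1) + if b then 1 else -1) ^ 2))]
  refine prod_eq_pow_card fun k _ => ?_
  have h : 2 * exp T * cosh T = exp (2 * T) + 1 := by
    rw [cosh_eq, Real.exp_neg, two_mul T, exp_add]
    field_simp
  cases ξ k <;> norm_num [h] <;> ring_nf

end Signs

theorem likelihood_ratio_moments_general (n M : ℕ)
    (σ u : ℝ) (x : Fin M → Fin n → ℝ)
    (hx : ∀ k j : Fin M, (∑ i, x k i * x j i) = if k = j then (n : ℝ) else 0) :
    let ℓ : (Fin n → ℝ) → ℝ := fun y =>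
      Real.exp (-((n : ℝ) * M * u ^ 2) / (2 * σ ^ 2)) * ((2 : ℝ) ^ M)⁻¹ *
        ∑ ξ : Fin M → Bool,
          Real.exp ((u / σ ^ 2) * ∑ k, (if ξ k then (1 : ℝ) else -1) * ∑ i, x k i * y i)
    let P : Measure (Fin n → ℝ) :=
      Measure.pi fun _ : Fin n => gaussianReal 0 (Real.toNNReal (σ ^ 2))
    (∫ y, ℓ y ∂P) = 1 ∧ (∫ y, (ℓ y) ^ 2 ∂P) = (Real.cosh ((n : ℝ) * u ^ 2 / σ ^ 2)) ^ M := by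
  intro ℓ P
  set T := (n : ℝ) * u ^ 2 / σ ^ 2 with hT
  have hv : ((σ ^ 2).toNNReal : ℝ) = σ ^ 2 := Real.coe_toNNReal _ (sq_nonneg σ)
  have hvT : σ ^ 2 * n * (u / σ ^ 2) ^ 2 / 2 = T / 2 := by rw [hT]; field_simp
  have hC : -((n : ℝ) * M * u ^ 2) / (2 * σ ^ 2) = -(T / 2 * M) := by ring
  have hE := integrable_exp_mul_sum_gaussianPi x (σ ^ 2).toNNReal (u / σ ^ 2)
  have hI := integral_exp_mul_sum_gaussianPi_of_orthogonal (σ ^ 2).toNNReal hx (u / σ ^ 2)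
  constructor
  · rw [integral_const_mul, integral_finsetSum _ fun ξ _ => hE _]
    simp_rw [hI, hv, hvT, sum_sign_sq, sum_const, card_univ, Fintype.card_fun, Fintype.card_bool,
      Fintype.card_fin, nsmul_eq_mul, hC, Real.exp_neg]
    push_cast
    field_simp
  · simp_rw [ℓ, mul_pow, sq_sum_exp_mul_sum]
    rw [integral_const_mul,
      integral_finsetSum _ fun ξ _ => integrable_finsetSum _ fun ξ' _ => hE _]
    simp_rw [integral_finsetSum _ fun ξ' _ => hE _, hI, hv, hvT, sum_exp_sum_sign_add_sq, sum_const,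
      card_univ, Fintype.card_fun, Fintype.card_bool, Fintype.card_fin, nsmul_eq_mul, hC]
    rw [← exp_nat_mul, show (2 : ℕ) * -(T / 2 * M) = M * -T by ring, exp_nat_mul, Real.exp_neg]
    push_cast
    field_simp
    rw [← mul_pow, ← mul_pow]
    congr 1
    field_simp

/-- Likelihood-ratio moment identities for the Rademacher-mixture alternative: if
`x₁, …, x_M ∈ ℝⁿ` satisfy `⟨x_k, x_j⟩ = n·δ_{kj}` and `P` is the law of a vector with
i.i.d. `N(0,σ²)` coordinates, then the likelihood ratio
`ℓ(y) = exp(−nMu²/(2σ²)) 2^{−M} Σ_{ξ ∈ {−1,1}^M} exp((u/σ²) Σ_k ξ_k ⟨x_k, y⟩)`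
satisfies `∫ ℓ dP = 1` and `∫ ℓ² dP = (cosh(nu²/σ²))^M`. -/
theorem likelihood_ratio_moments (n M : ℕ) (hn : 1 ≤ n) (hM : 1 ≤ M)
    (σ u : ℝ) (hσ : 0 < σ) (x : Fin M → Fin n → ℝ)
    (hx : ∀ k j : Fin M, (∑ i, x k i * x j i) = if k = j then (n : ℝ) else 0) :
    let ℓ : (Fin n → ℝ) → ℝ := fun y =>
      Real.exp (-((n : ℝ) * M * u ^ 2) / (2 * σ ^ 2)) * ((2 : ℝ) ^ M)⁻¹ *
        ∑ ξ : Fin M → Bool,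
          Real.exp ((u / σ ^ 2) * ∑ k, (if ξ k then (1 : ℝ) else -1) * ∑ i, x k i * y i)
    let P : Measure (Fin n → ℝ) :=
      Measure.pi fun _ : Fin n => gaussianReal 0 (Real.toNNReal (σ ^ 2))
    (∫ y, ℓ y ∂P) = 1 ∧ (∫ y, (ℓ y) ^ 2 ∂P) = (Real.cosh ((n : ℝ) * u ^ 2 / σ ^ 2)) ^ M :=
  likelihood_ratio_moments_general n M σ u x hx
end

section
/- Let r > 1/2 and let (κ_k)_{k≥1} be positive reals with c₁ k^{−2r} ≤ κ_k ≤ c₂ k^{−2r} for all k ≥ 1, for some constants 0 < c₁ ≤ c₂. For each integer n ≥ 1 define F_n(λ) = λ + (1/n) Σ_{k=1}^∞ κ_k/(√λ + κ_k) for λ > 0. Then there exist constants 0 < d₁ ≤ d₂ < ∞ and N such that for all n ≥ N, every minimizer λ*_n of F_n over (0, ∞) satisfies d₁ n^{−4r/(4r+1)} ≤ λ*_n ≤ d₂ n^{−4r/(4r+1)}. -/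
/-!
Write `S(λ) = ∑ κ_k / (√λ + κ_k)`. Each term is within a factor `2` of `min 1 (κ_k / √λ)`, and
`∑_k min 1 (A (k+1)^{-s}) ≍ A^{1/s}` for `A ≥ 1`: about `A^{1/s}` terms are clipped at `1`, and the
tail is compared with `∫_K^∞ x^{-s} dx`. Hence `S(λ) ≍ λ^{-1/(4r)}` for small `λ`. The two terms of
`F_n = λ + S/n` balance at `λ₀ = n^{-4r/(4r+1)}`, where `n λ₀ = λ₀^{-1/(4r)}`. A minimizer `l`
satisfies `l ≤ F_n(l) ≤ F_n(λ₀) ≲ λ₀`, and `S(l)/n ≤ F_n(λ₀) ≲ λ₀` forces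
`l^{-1/(4r)} ≲ λ₀^{-1/(4r)}`, i.e. `l ≳ λ₀`.
-/

open Real Finset Filter

noncomputable def clippedPowSum (s A : ℝ) : ℝ :=
  ∑' k : ℕ, min 1 (A * ((k : ℝ) + 1) ^ (-s))

lemma summable_nat_add_one_rpow_neg {s : ℝ} (hs : 1 < s) :
    Summable fun k : ℕ => ((k : ℝ) + 1) ^ (-s) := by
  have h := (summable_nat_add_iff 1).mpr (Real.summable_nat_rpow.mpr (by linarith : -s < -1))
  exact_mod_cast h

lemma summable_min_one_mul_rpow {s : ℝ} (hs : 1 < s) (A : ℝ) :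
    Summable fun k : ℕ => min 1 (A * ((k : ℝ) + 1) ^ (-s)) := by
  refine ((summable_nat_add_one_rpow_neg hs).mul_left |A|).of_norm_bounded fun k => ?_
  calc ‖min 1 (A * ((k : ℝ) + 1) ^ (-s))‖ ≤ |A * ((k : ℝ) + 1) ^ (-s)| := by
        rcases le_total 1 (A * ((k : ℝ) + 1) ^ (-s)) with h | h
        · rw [min_eq_left h, norm_one]
          exact h.trans (le_abs_self _)
        · rw [min_eq_right h, Real.norm_eq_abs]
    _ = |A| * ((k : ℝ) + 1) ^ (-s) := by
        rw [abs_mul, abs_of_pos (rpow_pos_of_pos (by positivity) _)]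

lemma tsum_rpow_neg_tail_le {s : ℝ} (hs : 1 < s) {K : ℕ} (hK : 0 < K) :
    ∑' n : ℕ, ((n + K + 1 : ℕ) : ℝ) ^ (-s) ≤ (K : ℝ) ^ (1 - s) / (s - 1) := by
  have hK' : (0 : ℝ) < K := by exact_mod_cast hK
  have anti : AntitoneOn (fun x : ℝ => x ^ (-s)) (Set.Ici (K : ℝ)) := fun x hx y _ hxy =>
    rpow_le_rpow_of_nonpos (hK'.trans_le hx) hxy (by linarith)
  calc ∑' n : ℕ, ((n + K + 1 : ℕ) : ℝ) ^ (-s)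
      ≤ ∫ x in Set.Ioi (K : ℝ), x ^ (-s) :=
        anti.tsum_comp_add_le_integral K (integrableOn_Ioi_rpow_of_lt (by linarith) hK')
          fun x hx => (rpow_pos_of_pos (hK'.trans hx) _).le
    _ = (K : ℝ) ^ (1 - s) / (s - 1) := by
        rw [integral_Ioi_rpow_of_lt (by linarith) hK', neg_add_eq_sub, neg_div, ← div_neg, neg_sub]

lemma clippedPowSum_le {s A : ℝ} (hs : 1 < s) (hA : 1 ≤ A) :
    clippedPowSum s A ≤ (2 + 1 / (s - 1)) * A ^ (1 / s) := by
  set x := A ^ (1 / s)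
  have hx : 1 ≤ x := one_le_rpow hA (by positivity)
  have hxs : x ^ s = A := by
    rw [← rpow_mul (by linarith), one_div_mul_cancel (by linarith), rpow_one]
  set K := ⌈x⌉₊
  have hK : 0 < K := Nat.ceil_pos.mpr (by linarith)
  have hxK : x ≤ K := Nat.le_ceil x
  have hKx : (K : ℝ) ≤ 2 * x := by linarith [Nat.ceil_lt_add_one (by linarith : 0 ≤ x)]
  have hsum := summable_min_one_mul_rpow hs A
  have head : ∑ k ∈ range K, min 1 (A * ((k : ℝ) + 1) ^ (-s)) ≤ K := by
    simpa using sum_le_sum fun k (_ : k ∈ range K) => min_le_left 1 (A * ((k : ℝ) + 1) ^ (-s))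
  have tail : ∑' n : ℕ, min 1 (A * (((n + K : ℕ) : ℝ) + 1) ^ (-s)) ≤ x / (s - 1) := calc
    _ ≤ ∑' n : ℕ, A * ((n + K + 1 : ℕ) : ℝ) ^ (-s) := by
        refine Summable.tsum_le_tsum (fun n => by push_cast; exact min_le_right _ _)
          ((summable_nat_add_iff K).mpr hsum) (Summable.mul_left A ?_)
        simpa only [← add_assoc] using
          (summable_nat_add_iff (K + 1)).mpr (Real.summable_nat_rpow.mpr (by linarith : -s < -1))
    _ = A * ∑' n : ℕ, ((n + K + 1 : ℕ) : ℝ) ^ (-s) := tsum_mul_left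
    _ ≤ A * (x ^ (1 - s) / (s - 1)) := by
        refine mul_le_mul_of_nonneg_left ((tsum_rpow_neg_tail_le hs hK).trans ?_) (by linarith)
        exact div_le_div_of_nonneg_right (rpow_le_rpow_of_nonpos (by linarith) hxK (by linarith))
          (by linarith)
    _ = x / (s - 1) := by
        rw [← hxs, mul_div_assoc', ← rpow_add (by linarith), add_sub_cancel, rpow_one]
  rw [clippedPowSum, ← hsum.sum_add_tsum_nat_add K]
  linarith [show (2 + 1 / (s - 1)) * x = 2 * x + x / (s - 1) by ring]

lemma le_clippedPowSum {s A : ℝ} (hs : 1 < s) (hA : 1 ≤ A) :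
    A ^ (1 / s) / 2 ≤ clippedPowSum s A := by
  set x := A ^ (1 / s)
  have hx : 1 ≤ x := one_le_rpow hA (by positivity)
  have hxs : x ^ (-s) = A⁻¹ := by
    rw [rpow_neg (by linarith), ← rpow_mul (by linarith), one_div_mul_cancel (by linarith),
      rpow_one]
  set K := ⌊x⌋₊
  have hK : 1 ≤ K := (Nat.one_le_floor_iff x).mpr hx
  have hKx : x / 2 ≤ K := by
    have : (1 : ℝ) ≤ K := by exact_mod_cast hK
    linarith [Nat.lt_floor_add_one x]
  have head : ∀ k ∈ range K, min 1 (A * ((k : ℝ) + 1) ^ (-s)) = 1 := by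
    intro k hk
    have hkx : ((k + 1 : ℕ) : ℝ) ≤ x := (Nat.le_floor_iff (by linarith)).mp (mem_range.mp hk)
    push_cast at hkx
    refine min_eq_left ?_
    calc (1 : ℝ) = A * x ^ (-s) := by rw [hxs, mul_inv_cancel₀ (by linarith)]
      _ ≤ A * ((k : ℝ) + 1) ^ (-s) :=
          mul_le_mul_of_nonneg_left
            (rpow_le_rpow_of_nonpos (by positivity) hkx (by linarith)) (by linarith)
  calc x / 2 ≤ K := hKx
    _ = ∑ k ∈ range K, min 1 (A * ((k : ℝ) + 1) ^ (-s)) := by simp [sum_congr rfl head]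
    _ ≤ clippedPowSum s A :=
        (summable_min_one_mul_rpow hs A).sum_le_tsum _ fun k _ => le_min zero_le_one (by positivity)

lemma div_add_le_min_one_div {t κ : ℝ} (ht : 0 < t) (hκ : 0 ≤ κ) : κ / (t + κ) ≤ min 1 (κ / t) :=
  le_min ((div_le_one (by linarith)).mpr (by linarith))
    (div_le_div_of_nonneg_left hκ ht (by linarith))

lemma min_one_div_le_two_mul_div_add {t κ : ℝ} (ht : 0 < t) (hκ : 0 ≤ κ) :
    min 1 (κ / t) ≤ 2 * (κ / (t + κ)) := by
  rw [mul_div_assoc', le_div_iff₀ (by linarith)]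
  rcases le_total t κ with h | h
  · nlinarith [min_le_left 1 (κ / t)]
  · have hκt : κ / t ≤ 1 := div_le_one_of_le₀ h ht.le
    have : κ / t * t = κ := div_mul_cancel₀ κ ht.ne'
    nlinarith [mul_le_mul_of_nonneg_right (min_le_right 1 (κ / t)) (by linarith : 0 ≤ t + κ),
      mul_le_mul_of_nonneg_right hκt hκ]

section SpectralSum

variable {s c t : ℝ} {κ : ℕ → ℝ}

lemma div_add_le_min_one_mul_rpow (ht : 0 < t) (hκ₀ : ∀ k, 0 ≤ κ k)
    (hκ : ∀ k : ℕ, κ k ≤ c * ((k : ℝ) + 1) ^ (-s)) (k : ℕ) :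
    κ k / (t + κ k) ≤ min 1 (c / t * ((k : ℝ) + 1) ^ (-s)) :=
  (div_add_le_min_one_div ht (hκ₀ k)).trans <| min_le_min_left _ <| by
    rw [div_mul_eq_mul_div]; exact div_le_div_of_nonneg_right (hκ k) ht.le

lemma summable_div_add_s16 (hs : 1 < s) (ht : 0 < t) (hκ₀ : ∀ k, 0 ≤ κ k)
    (hκ : ∀ k : ℕ, κ k ≤ c * ((k : ℝ) + 1) ^ (-s)) :
    Summable fun k => κ k / (t + κ k) :=
  (summable_min_one_mul_rpow hs (c / t)).of_nonneg_of_le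
    (fun k => div_nonneg (hκ₀ k) (by linarith [hκ₀ k])) (div_add_le_min_one_mul_rpow ht hκ₀ hκ)

lemma tsum_div_add_le_clippedPowSum (hs : 1 < s) (ht : 0 < t) (hκ₀ : ∀ k, 0 ≤ κ k)
    (hκ : ∀ k : ℕ, κ k ≤ c * ((k : ℝ) + 1) ^ (-s)) :
    ∑' k, κ k / (t + κ k) ≤ clippedPowSum s (c / t) :=
  (summable_div_add_s16 hs ht hκ₀ hκ).tsum_le_tsum (div_add_le_min_one_mul_rpow ht hκ₀ hκ)
    (summable_min_one_mul_rpow hs (c / t))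

lemma clippedPowSum_le_two_mul_tsum_div_add (hs : 1 < s) (ht : 0 < t) (hκ₀ : ∀ k, 0 ≤ κ k)
    (hκ : ∀ k : ℕ, c * ((k : ℝ) + 1) ^ (-s) ≤ κ k) (hsum : Summable fun k => κ k / (t + κ k)) :
    clippedPowSum s (c / t) ≤ 2 * ∑' k, κ k / (t + κ k) := by
  rw [← tsum_mul_left]
  refine (summable_min_one_mul_rpow hs (c / t)).tsum_le_tsum (fun k => ?_) (hsum.mul_left 2)
  refine le_trans (min_le_min_left _ ?_) (min_one_div_le_two_mul_div_add ht (hκ₀ k))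
  rw [div_mul_eq_mul_div]
  exact div_le_div_of_nonneg_right (hκ k) ht.le

end SpectralSum

lemma div_sqrt_rpow {c l : ℝ} (hc : 0 ≤ c) (hl : 0 ≤ l) (r : ℝ) :
    (c / √l) ^ (1 / (2 * r)) = c ^ (1 / (2 * r)) * l ^ (-(1 / (4 * r))) := by
  rw [div_rpow hc (sqrt_nonneg l), sqrt_eq_rpow, ← rpow_mul hl, div_eq_mul_inv,
    ← rpow_neg hl]
  congr 2
  ring

theorem tsum_div_sqrt_add_rpow_bounds {r c₁ c₂ l : ℝ} {κ : ℕ → ℝ} (hr : 1 / 2 < r)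
    (hc₁ : 0 < c₁) (hc : c₁ ≤ c₂)
    (hκ : ∀ k : ℕ, c₁ * ((k : ℝ) + 1) ^ (-(2 * r)) ≤ κ k ∧ κ k ≤ c₂ * ((k : ℝ) + 1) ^ (-(2 * r)))
    (hl : 0 < l) (hlc : l ≤ c₁ ^ 2) :
    c₁ ^ (1 / (2 * r)) / 4 * l ^ (-(1 / (4 * r))) ≤ ∑' k, κ k / (√l + κ k) ∧
      ∑' k, κ k / (√l + κ k) ≤
        (2 + 1 / (2 * r - 1)) * c₂ ^ (1 / (2 * r)) * l ^ (-(1 / (4 * r))) := by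
  have hs : 1 < 2 * r := by linarith
  have ht : 0 < √l := sqrt_pos.mpr hl
  have htc : √l ≤ c₁ := sqrt_le_iff.mpr ⟨hc₁.le, hlc⟩
  have hκ₀ : ∀ k, 0 ≤ κ k := fun k => le_trans (by positivity) (hκ k).1
  constructor
  · have h := (le_clippedPowSum hs ((one_le_div ht).mpr htc)).trans
      (clippedPowSum_le_two_mul_tsum_div_add hs ht hκ₀ (fun k => (hκ k).1)
        (summable_div_add_s16 hs ht hκ₀ fun k => (hκ k).2))
    rw [div_sqrt_rpow hc₁.le hl.le] at h
    linarith
  · have h := (tsum_div_add_le_clippedPowSum hs ht hκ₀ fun k => (hκ k).2).trans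
      (clippedPowSum_le hs ((one_le_div ht).mpr (htc.trans hc)))
    rwa [div_sqrt_rpow (hc₁.le.trans hc) hl.le, ← mul_assoc] at h

lemma mul_rpow_neg_div_add_one {n α : ℝ} (hn : 0 < n) (hα : 0 < α) :
    n * n ^ (-(α / (α + 1))) = (n ^ (-(α / (α + 1)))) ^ (-(1 / α)) := by
  have e : 1 + -(α / (α + 1)) = 1 / (α + 1) := by field_simp; ring
  rw [← rpow_mul hn.le, ← rpow_one_add' hn.le (by rw [e]; positivity), e]
  congr 1
  field_simp

lemma le_of_mul_rpow_neg_le_mul_rpow_neg {α a B x y : ℝ} (hα : 0 < α) (ha : 0 < a) (hB : 0 < B)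
    (hx : 0 < x) (hy : 0 < y) (h : a * x ^ (-(1 / α)) ≤ B * y ^ (-(1 / α))) :
    (a / B) ^ α * y ≤ x := by
  have h' := rpow_le_rpow_of_nonpos (by positivity) h (by linarith : -α ≤ 0)
  have cancel : ∀ z : ℝ, 0 < z → (z ^ (-(1 / α))) ^ (-α) = z := fun z hz => by
    rw [← rpow_mul hz.le, neg_mul_neg, one_div_mul_cancel hα.ne', rpow_one]
  rw [mul_rpow ha.le (by positivity), mul_rpow hB.le (by positivity), cancel x hx, cancel y hy,
    rpow_neg hB.le, rpow_neg ha.le, ← div_eq_inv_mul, le_inv_mul_iff₀ (by positivity)] at h'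
  rwa [div_rpow ha.le hB.le, div_mul_eq_mul_div, mul_div_assoc]

section Minimizer

variable {α a b ε : ℝ} {S : ℝ → ℝ}

theorem minimizer_bounds_of_rpow_bounds (hα : 0 < α) (ha : 0 < a) (hb : 0 ≤ b)
    (hS₀ : ∀ l, 0 ≤ S l)
    (hS : ∀ l, 0 < l → l ≤ ε → a * l ^ (-(1 / α)) ≤ S l ∧ S l ≤ b * l ^ (-(1 / α)))
    {n l : ℝ} (hn : 0 < n) (hnε : (1 + b) * n ^ (-(α / (α + 1))) ≤ ε) (hl : 0 < l)
    (hmin : ∀ μ : ℝ, 0 < μ → l + (1 / n) * S l ≤ μ + (1 / n) * S μ) :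
    (a / (1 + b)) ^ α * n ^ (-(α / (α + 1))) ≤ l ∧ l ≤ (1 + b) * n ^ (-(α / (α + 1))) := by
  set l₀ := n ^ (-(α / (α + 1)))
  have hl₀ : 0 < l₀ := rpow_pos_of_pos hn _
  have balance : n * l₀ = l₀ ^ (-(1 / α)) := mul_rpow_neg_div_add_one hn hα
  have hF : l + (1 / n) * S l ≤ (1 + b) * l₀ := calc
    l + (1 / n) * S l ≤ l₀ + (1 / n) * S l₀ := hmin l₀ hl₀
    _ ≤ l₀ + (1 / n) * (b * (n * l₀)) := by
        rw [balance]
        gcongr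
        exact (hS l₀ hl₀ (by nlinarith)).2
    _ = (1 + b) * l₀ := by field_simp
  have hSl : 0 ≤ (1 / n) * S l := mul_nonneg (by positivity) (hS₀ l)
  have upper : l ≤ (1 + b) * l₀ := by linarith
  refine ⟨le_of_mul_rpow_neg_le_mul_rpow_neg hα ha (by linarith) hl hl₀ ?_, upper⟩
  calc a * l ^ (-(1 / α)) ≤ S l := (hS l hl (upper.trans hnε)).1
    _ ≤ n * ((1 + b) * l₀) := by
        rw [← div_le_iff₀' hn]
        linarith [show 1 / n * S l = S l / n by ring]
    _ = (1 + b) * l₀ ^ (-(1 / α)) := by rw [← balance]; ring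

theorem exists_minimizer_bounds_of_rpow_bounds (hα : 0 < α) (ha : 0 < a) (hb : 0 ≤ b)
    (hε : 0 < ε) (hS₀ : ∀ l, 0 ≤ S l)
    (hS : ∀ l, 0 < l → l ≤ ε → a * l ^ (-(1 / α)) ≤ S l ∧ S l ≤ b * l ^ (-(1 / α))) :
    ∃ d₁ d₂ : ℝ, ∃ N : ℕ, 0 < d₁ ∧ d₁ ≤ d₂ ∧
      ∀ n : ℕ, N ≤ n → ∀ l : ℝ, 0 < l →
        (∀ μ : ℝ, 0 < μ → l + (1 / (n : ℝ)) * S l ≤ μ + (1 / (n : ℝ)) * S μ) →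
        d₁ * (n : ℝ) ^ (-(α / (α + 1))) ≤ l ∧ l ≤ d₂ * (n : ℝ) ^ (-(α / (α + 1))) := by
  have hq : 0 < α / (α + 1) := by positivity
  have small : ∀ᶠ n : ℕ in atTop, (n : ℝ) ^ (-(α / (α + 1))) ≤ ε / (1 + b) :=
    ((tendsto_rpow_neg_atTop hq).comp tendsto_natCast_atTop_atTop).eventually
      (ge_mem_nhds (by positivity))
  obtain ⟨N, hN⟩ := (small.and (eventually_ge_atTop 1)).exists_forall_of_atTop
  refine ⟨min ((a / (1 + b)) ^ α) (1 + b), 1 + b, N,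
    lt_min (by positivity) (by linarith), min_le_right _ _, fun n hn l hl hmin => ?_⟩
  obtain ⟨hnε, hn₁⟩ := hN n hn
  have hn₀ : (0 : ℝ) < n := by exact_mod_cast hn₁
  obtain ⟨lower, upper⟩ := minimizer_bounds_of_rpow_bounds hα ha hb hS₀ hS hn₀
    (by rwa [← le_div_iff₀' (by linarith)]) hl hmin
  exact ⟨le_trans (by gcongr; exact min_le_left _ _) lower, upper⟩

end Minimizer

/-- If the eigenvalues decay polynomially, `κ_k ≍ k^{−2r}` with `r > 1/2` (here `κ k`
stands for `κ_{k+1}`), then for large `n` every minimizer over `(0,∞)` of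
`F_n(λ) = λ + (1/n) Σ_k κ_k/(√λ + κ_k)` is of exact order `n^{−4r/(4r+1)}`. -/
theorem smoothing_parameter_order_polynomial (r : ℝ) (hr : 1 / 2 < r)
    (κ : ℕ → ℝ) (c₁ c₂ : ℝ) (hc₁ : 0 < c₁) (hc : c₁ ≤ c₂)
    (hκ : ∀ k : ℕ, c₁ * ((k : ℝ) + 1) ^ (-(2 * r)) ≤ κ k ∧
                   κ k ≤ c₂ * ((k : ℝ) + 1) ^ (-(2 * r))) :
    ∃ d₁ d₂ : ℝ, ∃ N : ℕ, 0 < d₁ ∧ d₁ ≤ d₂ ∧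
      ∀ n : ℕ, N ≤ n → ∀ l : ℝ, 0 < l →
        (∀ μ : ℝ, 0 < μ →
          l + (1 / (n : ℝ)) * (∑' k, κ k / (Real.sqrt l + κ k)) ≤
            μ + (1 / (n : ℝ)) * (∑' k, κ k / (Real.sqrt μ + κ k))) →
        d₁ * (n : ℝ) ^ (-(4 * r / (4 * r + 1))) ≤ l ∧
          l ≤ d₂ * (n : ℝ) ^ (-(4 * r / (4 * r + 1))) := by
  have hκ₀ : ∀ k, 0 ≤ κ k := fun k => le_trans (by positivity) (hκ k).1
  have hc₂ : 0 < c₂ := hc₁.trans_le hc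
  have hr' : 0 < 2 * r - 1 := by linarith
  exact exists_minimizer_bounds_of_rpow_bounds (by linarith : (0 : ℝ) < 4 * r)
    (by positivity : 0 < c₁ ^ (1 / (2 * r)) / 4)
    (by positivity : 0 ≤ (2 + 1 / (2 * r - 1)) * c₂ ^ (1 / (2 * r)))
    (by positivity : 0 < c₁ ^ 2)
    (fun l => tsum_nonneg fun k => div_nonneg (hκ₀ k) (add_nonneg (sqrt_nonneg l) (hκ₀ k)))
    fun l hl hlc => tsum_div_sqrt_add_rpow_bounds hr hc₁ hc hκ hl hlc
end

section
/- Let r > 0 and let (κ_k)_{k≥1} be positive reals with c₁ e^{−2rk} ≤ κ_k ≤ c₂ e^{−2rk} for all k ≥ 1, for some constants 0 < c₁ ≤ c₂. For each integer n ≥ 1 define F_n(λ) = λ + (1/n) Σ_{k=1}^∞ κ_k/(√λ + κ_k) for λ > 0. Then there exist constants 0 < d₁ ≤ d₂ < ∞ and N such that for all n ≥ N, every minimizer λ*_n of F_n over (0, ∞) satisfies d₁ n^{−1} ≤ λ*_n ≤ d₂ n^{−1}. -/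
/-!
Put `ρ = e^{-2r}`, so that `κ_k ≍ ρ^k`, and `G(s) = Σ κ_k / (s + κ_k)`, so that
`F_n(λ) = λ + G(√λ) / n`. Comparing a minimizer `λ` with `λ / 4` and with `4λ` gives
`(3/4) λ ≤ (G(√λ/2) - G(√λ)) / n` and `(G(√λ) - G(2√λ)) / n ≤ 3λ`.
The `k`-th term of `G(s) - G(2s)` is at most `min (κ_k / s) (s / κ_k)`, and these minima, taken
along a geometric sequence, have a sum bounded independently of `s`; this gives `λ ≲ 1/n`.
Conversely, once `√λ` is small there is an index with `κ_k ≍ √λ`, whose term alone is bounded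
below by a constant; this gives `λ ≳ 1/n`.
-/

open Real Set Finset

/-- `tr Q(Q + s)⁻¹` for an operator `Q` with eigenvalues `κ`. -/
noncomputable def effectiveDim (κ : ℕ → ℝ) (s : ℝ) : ℝ := ∑' k, κ k / (s + κ k)

section Geometric

variable {ρ τ : ℝ}

lemma summable_min_geometric (hρ₀ : 0 ≤ ρ) (hρ₁ : ρ < 1) (hτ : 0 < τ) :
    Summable fun k : ℕ => min (ρ ^ k / τ) (τ / ρ ^ k) :=
  ((summable_geometric_of_lt_one hρ₀ hρ₁).div_const τ).of_nonneg_of_le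
    (fun _ => le_min (by positivity) (by positivity)) fun _ => min_le_left _ _

lemma tsum_min_geometric_le (hρ₀ : 0 < ρ) (hρ₁ : ρ < 1) (hτ : 0 < τ) :
    ∑' k : ℕ, min (ρ ^ k / τ) (τ / ρ ^ k) ≤ 2 / (1 - ρ) := by
  set f := fun k : ℕ => min (ρ ^ k / τ) (τ / ρ ^ k)
  have hf : Summable f := summable_min_geometric hρ₀.le hρ₁ hτ
  have hgeom := summable_geometric_of_lt_one hρ₀.le hρ₁
  have h1ρ : 0 < 1 - ρ := sub_pos.2 hρ₁
  rcases le_or_gt 1 τ with hτ₁ | hτ₁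
  · calc ∑' k, f k ≤ ∑' k : ℕ, ρ ^ k :=
          hf.tsum_le_tsum (fun k => (min_le_left _ _).trans (div_le_self (by positivity) hτ₁))
            hgeom
      _ = 1 / (1 - ρ) := by rw [tsum_geometric_of_lt_one hρ₀.le hρ₁, one_div]
      _ ≤ 2 / (1 - ρ) := by gcongr; norm_num
  obtain ⟨n, hn₁, hn⟩ := exists_nat_pow_near_of_lt_one hτ hτ₁.le hρ₀ hρ₁
  have head : ∑ k ∈ range (n + 1), f k ≤ 1 / (1 - ρ) :=
    calc ∑ k ∈ range (n + 1), f k ≤ ∑ k ∈ range (n + 1), ρ ^ (n + 1 - 1 - k) := by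
          refine sum_le_sum fun k hk => (min_le_right _ _).trans ?_
          rw [Nat.add_sub_cancel, pow_sub₀ ρ hρ₀.ne' (Nat.lt_succ_iff.1 (mem_range.1 hk)),
            ← div_eq_mul_inv]
          gcongr
      _ = ∑ k ∈ range (n + 1), ρ ^ k := sum_range_reflect (ρ ^ ·) (n + 1)
      _ ≤ 1 / (1 - ρ) := by
          simpa using geom_sum_Ico_le_of_lt_one (m := 0) (n := n + 1) hρ₀.le hρ₁
  have tail : ∑' j, f (j + (n + 1)) ≤ 1 / (1 - ρ) :=
    calc ∑' j, f (j + (n + 1)) ≤ ∑' j : ℕ, ρ ^ j := by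
          refine ((summable_nat_add_iff _).2 hf).tsum_le_tsum (fun j => ?_) hgeom
          refine (min_le_left _ _).trans ?_
          rw [div_le_iff₀ hτ, pow_add]
          exact mul_le_mul_of_nonneg_left hn₁.le (by positivity)
      _ = 1 / (1 - ρ) := by rw [tsum_geometric_of_lt_one hρ₀.le hρ₁, one_div]
  rw [← hf.sum_add_tsum_nat_add (n + 1)]
  linarith [show 2 / (1 - ρ) = 1 / (1 - ρ) + 1 / (1 - ρ) by ring]

end Geometric

section Increment

variable {x s : ℝ}

lemma div_add_sub_div_two_mul_add (hx : 0 ≤ x) (hs : 0 < s) :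
    x / (s + x) - x / (2 * s + x) = x * s / ((s + x) * (2 * s + x)) := by
  field_simp
  ring

lemma mul_div_add_mul_two_mul_add_le_min (hx : 0 < x) (hs : 0 < s) :
    x * s / ((s + x) * (2 * s + x)) ≤ min (x / s) (s / x) := by
  refine le_min ?_ ?_ <;> rw [div_le_div_iff₀ (by positivity) (by positivity)] <;>
    nlinarith [mul_pos hx hs, mul_pos (mul_pos hx hs) hs, mul_pos (mul_pos hx hs) hx,
      mul_pos (mul_pos hx hx) hx, mul_pos (mul_pos hs hs) hs]

lemma one_div_six_mul_le_mul_div_add_mul_two_mul_add {B : ℝ} (hs : 0 < s) (hsx : s ≤ x)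
    (hxB : x ≤ B * s) : 1 / (6 * B) ≤ x * s / ((s + x) * (2 * s + x)) := by
  have hx : 0 < x := hs.trans_le hsx
  calc 1 / (6 * B) = s / (6 * (B * s)) := by field_simp
    _ ≤ s / (6 * x) := by gcongr
    _ = x * s / (2 * x * (3 * x)) := by field_simp; ring
    _ ≤ x * s / ((s + x) * (2 * s + x)) := by gcongr <;> linarith

end Increment

section EffectiveDim

variable {x : ℕ → ℝ} {s : ℝ}

lemma summable_div_add_s17 (hx : Summable x) (hx₀ : ∀ k, 0 ≤ x k) (hs : 0 < s) :
    Summable fun k => x k / (s + x k) :=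
  (hx.div_const s).of_nonneg_of_le (fun k => div_nonneg (hx₀ k) (by linarith [hx₀ k]))
    fun k => div_le_div_of_nonneg_left (hx₀ k) hs (le_add_of_nonneg_right (hx₀ k))

lemma hasSum_effectiveDim_sub_two_mul (hx : Summable x) (hx₀ : ∀ k, 0 ≤ x k) (hs : 0 < s) :
    HasSum (fun k => x k * s / ((s + x k) * (2 * s + x k)))
      (effectiveDim x s - effectiveDim x (2 * s)) :=
  ((summable_div_add_s17 hx hx₀ hs).hasSum.sub
    (summable_div_add_s17 hx hx₀ (by positivity)).hasSum).congr_fun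
      fun k => (div_add_sub_div_two_mul_add (hx₀ k) hs).symm

variable {ρ a b : ℝ} (hρ₀ : 0 < ρ) (hρ₁ : ρ < 1) (ha : 0 < a)
  (hlo : ∀ k, a * ρ ^ k ≤ x k) (hhi : ∀ k, x k ≤ b * ρ ^ k)
include hρ₀ hρ₁ ha hlo hhi

lemma effectiveDim_sub_two_mul_le (hs : 0 < s) :
    effectiveDim x s - effectiveDim x (2 * s) ≤ b / a * (2 / (1 - ρ)) := by
  have hx : ∀ k, 0 < x k := fun k => (by positivity : 0 < a * ρ ^ k).trans_le (hlo k)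
  have hba : 1 ≤ b / a := (one_le_div ha).2 (by simpa using (hlo 0).trans (hhi 0))
  have hsum : Summable x :=
    ((summable_geometric_of_lt_one hρ₀.le hρ₁).mul_left b).of_nonneg_of_le (fun k => (hx k).le) hhi
  refine (hasSum_le (fun k => ?_) (hasSum_effectiveDim_sub_two_mul hsum (fun k => (hx k).le) hs)
    ((summable_min_geometric hρ₀.le hρ₁ (div_pos hs ha)).hasSum.mul_left (b / a))).trans
      (mul_le_mul_of_nonneg_left (tsum_min_geometric_le hρ₀ hρ₁ (div_pos hs ha)) (by positivity))
  refine (mul_div_add_mul_two_mul_add_le_min (hx k) hs).trans ?_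
  rw [mul_min_of_nonneg _ _ (by positivity)]
  refine min_le_min ?_ ?_
  · calc x k / s ≤ b * ρ ^ k / s := by gcongr; exact hhi k
      _ = b / a * (ρ ^ k / (s / a)) := by field_simp
  · calc s / x k ≤ s / (a * ρ ^ k) := by gcongr; exact hlo k
      _ ≤ b / a * (s / (a * ρ ^ k)) := le_mul_of_one_le_left (by positivity) hba
      _ = b / a * (s / a / ρ ^ k) := by rw [div_div]

lemma exists_le_le_mul (hs : 0 < s) (hsa : s ≤ a) : ∃ k, s ≤ x k ∧ x k ≤ b / (a * ρ) * s := by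
  obtain ⟨n, hn₁, hn⟩ :=
    exists_nat_pow_near_of_lt_one (div_pos hs ha) ((div_le_one ha).2 hsa) hρ₀ hρ₁
  have hb : 0 ≤ b := ha.le.trans (by simpa using (hlo 0).trans (hhi 0))
  refine ⟨n, ?_, ?_⟩
  · exact ((div_le_iff₀' ha).1 hn).trans (hlo n)
  · calc x n ≤ b * ρ ^ n := hhi n
      _ = b / (a * ρ) * (a * ρ ^ (n + 1)) := by field_simp; ring
      _ ≤ b / (a * ρ) * s := by gcongr; exact ((lt_div_iff₀' ha).1 hn₁).le

lemma one_div_six_mul_le_effectiveDim_sub_two_mul (hs : 0 < s) (hsa : s ≤ a) :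
    1 / (6 * (b / (a * ρ))) ≤ effectiveDim x s - effectiveDim x (2 * s) := by
  have hx : ∀ k, 0 < x k := fun k => (by positivity : 0 < a * ρ ^ k).trans_le (hlo k)
  have hsum : Summable x :=
    ((summable_geometric_of_lt_one hρ₀.le hρ₁).mul_left b).of_nonneg_of_le (fun k => (hx k).le) hhi
  obtain ⟨k, hsk, hkb⟩ := exists_le_le_mul hρ₀ hρ₁ ha hlo hhi hs hsa
  exact (one_div_six_mul_le_mul_div_add_mul_two_mul_add hs hsk hkb).trans
    (le_hasSum (hasSum_effectiveDim_sub_two_mul hsum (fun k => (hx k).le) hs) k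
      fun j _ => by have := hx j; positivity)

end EffectiveDim

lemma le_sub_and_sub_le_of_isMinOn {G : ℝ → ℝ} {ε l : ℝ} (hl : 0 < l)
    (hmin : IsMinOn (fun μ => μ + ε * G √μ) (Ioi 0) l) :
    3 / 4 * l ≤ ε * (G (√l / 2) - G √l) ∧ ε * (G √l - G (2 * √l)) ≤ 3 * l := by
  have hsl : 0 < √l := sqrt_pos.2 hl
  have hquarter : l + ε * G √l ≤ (√l / 2) ^ 2 + ε * G (√l / 2) := by
    have := isMinOn_iff.1 hmin ((√l / 2) ^ 2) (mem_Ioi.2 (by positivity))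
    rwa [sqrt_sq (by positivity)] at this
  have hfour : l + ε * G √l ≤ (2 * √l) ^ 2 + ε * G (2 * √l) := by
    have := isMinOn_iff.1 hmin ((2 * √l) ^ 2) (mem_Ioi.2 (by positivity))
    rwa [sqrt_sq (by positivity)] at this
  rw [div_pow, sq_sqrt hl.le] at hquarter
  rw [mul_pow, sq_sqrt hl.le] at hfour
  constructor <;> linarith

lemma mul_inv_natCast_le_of_div_le {K c : ℝ} {n : ℕ} (hc : 0 < c) (hn : K / c ≤ n) :
    K * (n : ℝ)⁻¹ ≤ c := by
  rcases (n.cast_nonneg (α := ℝ)).eq_or_lt with h | h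
  · rw [← h, inv_zero, mul_zero]
    exact hc.le
  · rw [← div_eq_mul_inv, div_le_iff₀ h, ← div_le_iff₀' hc]
    exact hn

/-- If the eigenvalues decay exponentially, `κ_k ≍ e^{−2rk}` with `r > 0` (here `κ k`
stands for `κ_{k+1}`), then for large `n` every minimizer over `(0,∞)` of
`F_n(λ) = λ + (1/n) Σ_k κ_k/(√λ + κ_k)` is of exact order `n^{−1}`. -/
theorem smoothing_parameter_order_exponential (r : ℝ) (hr : 0 < r)
    (κ : ℕ → ℝ) (c₁ c₂ : ℝ) (hc₁ : 0 < c₁) (hc : c₁ ≤ c₂)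
    (hκ : ∀ k : ℕ, c₁ * Real.exp (-(2 * r * ((k : ℝ) + 1))) ≤ κ k ∧
                   κ k ≤ c₂ * Real.exp (-(2 * r * ((k : ℝ) + 1)))) :
    ∃ d₁ d₂ : ℝ, ∃ N : ℕ, 0 < d₁ ∧ d₁ ≤ d₂ ∧
      ∀ n : ℕ, N ≤ n → ∀ l : ℝ, 0 < l →
        (∀ μ : ℝ, 0 < μ →
          l + (1 / (n : ℝ)) * (∑' k, κ k / (Real.sqrt l + κ k)) ≤
            μ + (1 / (n : ℝ)) * (∑' k, κ k / (Real.sqrt μ + κ k))) →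
        d₁ * (n : ℝ)⁻¹ ≤ l ∧ l ≤ d₂ * (n : ℝ)⁻¹ := by
  set ρ := exp (-(2 * r))
  have hρ₀ : 0 < ρ := exp_pos _
  have hρ₁ : ρ < 1 := exp_lt_one_iff.2 (by linarith)
  have hexp (k : ℕ) : exp (-(2 * r * ((k : ℝ) + 1))) = ρ * ρ ^ k := by
    rw [← exp_nat_mul, ← exp_add]; ring_nf
  have hlo (k : ℕ) : c₁ * ρ * ρ ^ k ≤ κ k := by rw [mul_assoc, ← hexp]; exact (hκ k).1
  have hhi (k : ℕ) : κ k ≤ c₂ * ρ * ρ ^ k := by rw [mul_assoc, ← hexp]; exact (hκ k).2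
  have ha : 0 < c₁ * ρ := by positivity
  have hc₂ : 0 < c₂ := hc₁.trans_le hc
  set C := c₂ * ρ / (c₁ * ρ) * (2 / (1 - ρ))
  set B := c₂ * ρ / (c₁ * ρ * ρ)
  refine ⟨1 / (6 * B) / 3, max (4 / 3 * C) (1 / (6 * B) / 3), ⌈4 / 3 * C / (c₁ * ρ) ^ 2⌉₊,
    by positivity, le_max_right _ _, fun n hn l hl hmin => ?_⟩
  obtain ⟨hquarter, hfour⟩ :=
    le_sub_and_sub_le_of_isMinOn (G := effectiveDim κ) hl (isMinOn_iff.2 hmin)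
  have hn₀ : 0 ≤ (n : ℝ)⁻¹ := inv_nonneg.2 n.cast_nonneg
  rw [one_div] at hquarter hfour
  have hupper : l ≤ 4 / 3 * C * (n : ℝ)⁻¹ := by
    have hC := effectiveDim_sub_two_mul_le hρ₀ hρ₁ ha hlo hhi (s := √l / 2) (by positivity)
    rw [mul_div_cancel₀ _ two_ne_zero] at hC
    linarith [mul_le_mul_of_nonneg_left hC hn₀]
  have hsmall : √l ≤ c₁ * ρ := sqrt_le_iff.2 ⟨ha.le, hupper.trans
    (mul_inv_natCast_le_of_div_le (by positivity) (Nat.ceil_le.1 hn))⟩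
  have hB := one_div_six_mul_le_effectiveDim_sub_two_mul hρ₀ hρ₁ ha hlo hhi (sqrt_pos.2 hl) hsmall
  refine ⟨?_, hupper.trans (by gcongr; exact le_max_left _ _)⟩
  linarith [mul_le_mul_of_nonneg_right hB hn₀]
end
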